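/- Let θ be a CPWL function, let x̄, v̄, Ψ, Λ(x̄) be as in the variational-system setting with v̄ ∈ Λ(x̄), and assume in addition that f is continuously differentiable around x̄ and Φ is twice continuously differentiable around x̄. If v̄ is a noncritical multiplier, then there exists a neighborhood V of (x̄,v̄) such that S(0,0) ∩ V = ({x̄} × Λ(x̄)) ∩ V. -/

import Mathlib

open Filter Topology Set RealInnerProductSpace

noncomputable section

abbrev Ev (k : ℕ) := EuclideanSpace ℝ (Fin k)

/-- The Bouligand–Severi tangent cone to a set `s` at `x`. -/
def tcone {E : Type*} [NormedAddCommGroup E] [NormedSpace ℝ E] (s : Set E) (x : E) : Set E :=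
  {w | ∃ (z : ℕ → E) (c : ℕ → ℝ), (∀ k, z k ∈ s) ∧ (∀ k, 0 ≤ c k) ∧
      Tendsto z atTop (𝓝 x) ∧ Tendsto (fun k => c k • (z k - x)) atTop (𝓝 w)}

/-- The data of a convex piecewise linear (CPWL) extended-real-valued function on `ℝ^m`:
`θ(z) = max_i (⟨a i, z⟩ - al i)` on the polyhedron `dom θ = {z | ⟨d i, z⟩ ≤ be i ∀ i}`,
and `θ(z) = +∞` outside of it. -/
structure CPWL (m : ℕ) where
  l : ℕ
  p : ℕ
  hl : 0 < l
  a : Fin l → Ev m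
  al : Fin l → ℝ
  d : Fin p → Ev m
  be : Fin p → ℝ
  dom_nonempty : ∃ z : Ev m, ∀ i, ⟪d i, z⟫ ≤ be i

namespace CPWL

variable {m : ℕ} (θ : CPWL m)

/-- The (polyhedral) domain of the CPWL function. -/
def dom : Set (Ev m) := {z | ∀ i, ⟪θ.d i, z⟫ ≤ θ.be i}

/-- The real value `max_i (⟨a i, z⟩ - al i)` of the CPWL function (meaningful on its domain). -/
def val (z : Ev m) : ℝ := ⨆ i : Fin θ.l, (⟪θ.a i, z⟫ - θ.al i)

/-- The CPWL function as an extended-real-valued function. -/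
def eval (z : Ev m) : EReal :=
  @ite _ (z ∈ θ.dom) (Classical.propDecidable _) ((θ.val z : ℝ) : EReal) ⊤

/-- The subdifferential (of convex analysis) of the CPWL function. -/
def subdiff (z : Ev m) : Set (Ev m) :=
  {v | z ∈ θ.dom ∧ ∀ z' ∈ θ.dom, ⟪v, z' - z⟫ ≤ θ.val z' - θ.val z}

/-- Active indices `K(z)` of the max-representation. -/
def Kact (z : Ev m) : Set (Fin θ.l) := {i | θ.val z = ⟪θ.a i, z⟫ - θ.al i}

/-- Active indices `I(z)` of the domain constraints. -/
def Iact (z : Ev m) : Set (Fin θ.p) := {i | ⟪θ.d i, z⟫ = θ.be i}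

/-- The critical cone `𝒦(z̄,v̄) = {w ∈ T(z̄; dom θ) : ⟨v̄,w⟩ = θ′(z̄;w)}`. -/
def crit (zb vb : Ev m) : Set (Ev m) :=
  {w | w ∈ tcone θ.dom zb ∧
    Tendsto (fun t : ℝ => (θ.val (zb + t • w) - θ.val zb) / t) (𝓝[>] (0 : ℝ))
      (𝓝 ⟪vb, w⟫)}

/-- The graph of the subdifferential mapping. -/
def gph : Set (Ev m × Ev m) := {zv | zv.2 ∈ θ.subdiff zv.1}

/-- The graphical derivative `(D∂θ)(z̄,v̄)(u)`. -/
def Dsub (zb vb u : Ev m) : Set (Ev m) := {w | (u, w) ∈ tcone θ.gph (zb, vb)}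

/-- The regular coderivative `(D̂*∂θ)(z̄,v̄)(u)`. -/
def Dhat (zb vb u : Ev m) : Set (Ev m) :=
  {w | ∀ h ∈ tcone θ.gph (zb, vb), ⟪w, h.1⟫ - ⟪u, h.2⟫ ≤ 0}

end CPWL

section VarSys

variable {n m : ℕ}

/-- The adjoint `∇Φ(x)*` of the Jacobian of `Φ` at `x`. -/
def adjD (Φ : Ev n → Ev m) (x : Ev n) : Ev m →L[ℝ] Ev n :=
  ContinuousLinearMap.adjoint (fderiv ℝ Φ x)

/-- `Ψ(x,v) = f(x) + ∇Φ(x)* v`. -/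
def Psi (f : Ev n → Ev n) (Φ : Ev n → Ev m) (x : Ev n) (v : Ev m) : Ev n :=
  f x + adjD Φ x v

/-- The partial Jacobian `∇ₓΨ(x̄,v̄)`. -/
def gradxPsi (f : Ev n → Ev n) (Φ : Ev n → Ev m) (xb : Ev n) (vb : Ev m) :
    Ev n →L[ℝ] Ev n :=
  fderiv ℝ (fun x => Psi f Φ x vb) xb

/-- The Lagrange multiplier set `Λ(x̄)` of the variational system. -/
def Lam (f : Ev n → Ev n) (Φ : Ev n → Ev m) (θ : CPWL m) (xb : Ev n) : Set (Ev m) :=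
  {v | Psi f Φ xb v = 0 ∧ v ∈ θ.subdiff (Φ xb)}

/-- `v̄` is a critical multiplier for the variational system. -/
def IsCritical (f : Ev n → Ev n) (Φ : Ev n → Ev m) (θ : CPWL m) (xb : Ev n) (vb : Ev m) :
    Prop :=
  ∃ ξ : Ev n, ξ ≠ 0 ∧ ∃ w ∈ θ.Dsub (Φ xb) vb (fderiv ℝ Φ xb ξ),
    gradxPsi f Φ xb vb ξ + adjD Φ xb w = 0

/-- The solution map of the canonically perturbed variational system. -/
def Smap (f : Ev n → Ev n) (Φ : Ev n → Ev m) (θ : CPWL m) (p₁ : Ev n) (p₂ : Ev m) :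
    Set (Ev n × Ev m) :=
  {xv | Psi f Φ xv.1 xv.2 = p₁ ∧ xv.2 ∈ θ.subdiff (Φ xv.1 + p₂)}

end VarSys

section General

variable {n m : ℕ}

/-- The subdifferential of a general extended-real-valued function. -/
def subdiffE (θ : Ev m → EReal) (z : Ev m) : Set (Ev m) :=
  {v | ∀ z', ((⟪v, z' - z⟫ : ℝ) : EReal) ≤ θ z' - θ z}

/-- The graph of the subdifferential of a general extended-real-valued function. -/
def gphE (θ : Ev m → EReal) : Set (Ev m × Ev m) := {zv | zv.2 ∈ subdiffE θ zv.1}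

/-- The graphical derivative of the subdifferential, general case. -/
def DsubE (θ : Ev m → EReal) (zb vb u : Ev m) : Set (Ev m) :=
  {w | (u, w) ∈ tcone (gphE θ) (zb, vb)}

/-- The Lagrange multiplier set, general case. -/
def LamE (f : Ev n → Ev n) (Φ : Ev n → Ev m) (θ : Ev m → EReal) (xb : Ev n) :
    Set (Ev m) :=
  {v | Psi f Φ xb v = 0 ∧ v ∈ subdiffE θ (Φ xb)}

/-- The solution map of the canonically perturbed variational system, general case. -/
def SmapE (f : Ev n → Ev n) (Φ : Ev n → Ev m) (θ : Ev m → EReal) (p₁ : Ev n)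
    (p₂ : Ev m) : Set (Ev n × Ev m) :=
  {xv | Psi f Φ xv.1 xv.2 = p₁ ∧ xv.2 ∈ subdiffE θ (Φ xv.1 + p₂)}

end General

section Composite

variable {n m : ℕ}

/-- The gradient `∇ₓL(·,v)` of the Lagrangian `L(x,v) = φ₀(x) + ⟨Φ(x),v⟩`. -/
def gradL (φ₀ : Ev n → ℝ) (Φ : Ev n → Ev m) (v : Ev m) (x : Ev n) : Ev n :=
  gradient (fun y => φ₀ y + ⟪Φ y, v⟫) x

/-- The Hessian `∇²ₓₓL(x̄,v)` as a linear operator. -/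
def HessOp (φ₀ : Ev n → ℝ) (Φ : Ev n → Ev m) (v : Ev m) (xb : Ev n) : Ev n →L[ℝ] Ev n :=
  fderiv ℝ (gradL φ₀ Φ v) xb

/-- The Lagrange multiplier set `Λ_com(x̄)` of the composite optimization problem. -/
def LamCom (φ₀ : Ev n → ℝ) (Φ : Ev n → Ev m) (θ : CPWL m) (xb : Ev n) : Set (Ev m) :=
  {v | gradient φ₀ xb + adjD Φ xb v = 0 ∧ v ∈ θ.subdiff (Φ xb)}

/-- Criticality of a multiplier in the composite optimization setting. -/
def IsCriticalCom (φ₀ : Ev n → ℝ) (Φ : Ev n → Ev m) (θ : CPWL m) (xb : Ev n) (v : Ev m) :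
    Prop :=
  ∃ ξ : Ev n, ξ ≠ 0 ∧ ∃ w ∈ θ.Dsub (Φ xb) v (fderiv ℝ Φ xb ξ),
    HessOp φ₀ Φ v xb ξ + adjD Φ xb w = 0

/-- The solution map of the canonically perturbed KKT system of composite optimization. -/
def SKKT (φ₀ : Ev n → ℝ) (Φ : Ev n → Ev m) (θ : CPWL m) (p₁ : Ev n) (p₂ : Ev m) :
    Set (Ev n × Ev m) :=
  {xv | gradient φ₀ xv.1 + adjD Φ xv.1 xv.2 = p₁ ∧ xv.2 ∈ θ.subdiff (Φ xv.1 + p₂)}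

/-- `x̄` is a local minimizer of `φ₀ + θ∘Φ`. -/
def LocalMin (φ₀ : Ev n → ℝ) (Φ : Ev n → Ev m) (θ : CPWL m) (xb : Ev n) : Prop :=
  ∃ U ∈ 𝓝 xb, ∀ x ∈ U,
    ((φ₀ xb : ℝ) : EReal) + θ.eval (Φ xb) ≤ ((φ₀ x : ℝ) : EReal) + θ.eval (Φ x)

end Composite

section Calmness

variable {n m : ℕ}

/-- Isolated calmness of a solution map at `((0,0), q0)`. -/
def IsolCalm (S : Ev n × Ev m → Set (Ev n × Ev m)) (q0 : Ev n × Ev m) : Prop :=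
  ∃ c : ℝ, 0 ≤ c ∧ ∃ U ∈ 𝓝 (0 : Ev n × Ev m), ∃ V ∈ 𝓝 q0,
    ∀ p ∈ U, ∀ q ∈ S p ∩ V, ‖q - q0‖ ≤ c * (‖p.1‖ + ‖p.2‖)

/-- Robust isolated calmness of a solution map at `((0,0), q0)`. -/
def RobustIsolCalm (S : Ev n × Ev m → Set (Ev n × Ev m)) (q0 : Ev n × Ev m) : Prop :=
  ∃ c : ℝ, 0 ≤ c ∧ ∃ U ∈ 𝓝 (0 : Ev n × Ev m), ∃ V ∈ 𝓝 q0,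
    (∀ p ∈ U, ∀ q ∈ S p ∩ V, ‖q - q0‖ ≤ c * (‖p.1‖ + ‖p.2‖)) ∧
    (∀ p ∈ U, (S p ∩ V).Nonempty)

/-- The Lipschitz-like (Aubin) property of a solution map around `((0,0), q0)`. -/
def LipschitzLike (S : Ev n × Ev m → Set (Ev n × Ev m)) (q0 : Ev n × Ev m) : Prop :=
  ∃ c : ℝ, 0 ≤ c ∧ ∃ U ∈ 𝓝 (0 : Ev n × Ev m), ∃ V ∈ 𝓝 q0,
    ∀ p ∈ U, ∀ p' ∈ U, ∀ q ∈ S p ∩ V, ∃ q' ∈ S p', ‖q - q'‖ ≤ c * ‖p - p'‖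

end Calmness

/-!
Suppose the claim fails: then there are solutions `(x k, v k) → (xb, vb)` of the unperturbed
system with `x k ≠ xb`. Along a subsequence the directions `(x k - xb) / ‖x k - xb‖` converge to
a unit vector `ξ` and the active index sets of `θ` at `Φ (x k)` are constant, say `(K, I)`.
Then `∂θ (Φ (x k))` is the fixed polyhedron `P = conv {a i | i ∈ K} + cone {d j | j ∈ I}` (the
inclusion `⊆` is a Hahn–Banach argument), and `P ⊆ ∂θ z` on the whole convex region `R` of
points `z` at which `K` and `I` are active. The rescaled multipliers `(v k - vb) / ‖x k - xb‖`
lie in the finitely generated cone of feasible directions of `P` at `vb`; its image under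
`∇Φ(xb)*` is closed (conic Carathéodory), so passing to the limit in `Ψ (x k) (v k) = 0` yields
`w` in that cone with `∇ₓΨ(xb,vb) ξ + ∇Φ(xb)* w = 0`. Since `R × P ⊆ gph ∂θ`, the pair
`(∇Φ(xb) ξ, w)` is tangent to `gph ∂θ` at `(Φ xb, vb)`, so `vb` would be critical.
-/

namespace PointedCone

variable {E : Type*} [AddCommGroup E] [Module ℝ E]

theorem mem_hull_range_iff {ι : Type*} [Fintype ι] {g : ι → E} {x : E} :
    x ∈ hull ℝ (range g) ↔ ∃ μ : ι → ℝ, 0 ≤ μ ∧ ∑ i, μ i • g i = x := by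
  rw [Submodule.mem_span_range_iff_exists_fun]
  constructor
  · rintro ⟨c, rfl⟩
    exact ⟨fun i => c i, fun i => (c i).2, by simp [Nonneg.coe_smul]⟩
  · rintro ⟨μ, hμ, rfl⟩
    exact ⟨fun i => ⟨μ i, hμ i⟩, by simp [Nonneg.mk_smul]⟩

theorem exists_nonneg_sum_eq_of_not_linearIndependent {ι : Type*} [Fintype ι] {g : ι → E}
    (hg : ¬ LinearIndependent ℝ g) {μ : ι → ℝ} (hμ : 0 ≤ μ) :
    ∃ ν : ι → ℝ, 0 ≤ ν ∧ (∃ i, ν i = 0) ∧ ∑ i, ν i • g i = ∑ i, μ i • g i := by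
  obtain ⟨c, hc, i₁, hi₁⟩ := Fintype.not_linearIndependent_iff.1 hg
  wlog hpos : ∃ i, 0 < c i generalizing c
  · refine this (-c) (by simp [hc]) (by simpa using hi₁) ⟨i₁, ?_⟩
    push Not at hpos
    exact neg_pos.2 ((hpos i₁).lt_of_ne hi₁)
  -- Subtract the largest multiple of the dependence `c` that keeps all coefficients nonnegative.
  obtain ⟨i₂, hi₂⟩ := hpos
  have hP : (Finset.univ.filter fun i => 0 < c i).Nonempty := ⟨i₂, by simpa using hi₂⟩
  obtain ⟨i₀, hi₀, hmin⟩ := Finset.exists_min_image _ (fun i => μ i / c i) hP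
  have hci₀ : 0 < c i₀ := (Finset.mem_filter.1 hi₀).2
  set r := μ i₀ / c i₀
  refine ⟨μ - r • c, fun i => ?_, ⟨i₀, ?_⟩, ?_⟩
  · rcases le_or_gt (c i) 0 with hci | hci
    · have : 0 ≤ r := div_nonneg (hμ i₀) hci₀.le
      simp only [Pi.zero_apply, Pi.sub_apply, Pi.smul_apply, smul_eq_mul, sub_nonneg]
      exact (mul_nonpos_of_nonneg_of_nonpos this hci).trans (hμ i)
    · have := hmin i (by simpa using hci)
      rw [div_le_div_iff₀ hci₀ hci] at this
      simp only [Pi.zero_apply, Pi.sub_apply, Pi.smul_apply, smul_eq_mul, sub_nonneg, r]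
      rw [div_mul_eq_mul_div, div_le_iff₀ hci₀]
      linarith
  · simp [r, div_mul_cancel₀ _ hci₀.ne']
  · simp [sub_smul, Finset.sum_sub_distrib, mul_smul, ← Finset.smul_sum, hc]

theorem image_hull {F : Type*} [AddCommGroup F] [Module ℝ F] (f : E →ₗ[ℝ] F) (s : Set E) :
    f '' (hull ℝ s) = hull ℝ (f '' s) := by
  rw [← PointedCone.coe_map]
  exact congrArg _ (Submodule.map_span _ _)

variable [TopologicalSpace E] [IsTopologicalAddGroup E] [ContinuousSMul ℝ E] [T2Space E]

theorem isClosed_hull_range_of_linearIndependent {ι : Type*} [Fintype ι] {g : ι → E}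
    (hg : LinearIndependent ℝ g) : IsClosed (hull ℝ (range g) : Set E) := by
  have hL : IsClosedEmbedding (Fintype.linearCombination ℝ g) :=
    LinearMap.isClosedEmbedding_of_injective
      (LinearMap.ker_eq_bot.2 hg.fintypeLinearCombination_injective)
  convert hL.isClosedMap _ (isClosed_Ici (a := (0 : ι → ℝ))) using 1
  ext x
  simp [mem_hull_range_iff, Fintype.linearCombination_apply]

theorem isClosed_hull_finset (s : Finset E) : IsClosed (hull ℝ (s : Set E) : Set E) := by
  classical
  induction s using Finset.strongInduction with
  | H s ih =>
  have hs : (s : Set E) = range ((↑) : s → E) := Subtype.range_coe.symm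
  by_cases hli : LinearIndependent ℝ ((↑) : s → E)
  · rw [hs]
    exact isClosed_hull_range_of_linearIndependent hli
  · suffices (hull ℝ (s : Set E) : Set E) = ⋃ y ∈ s, (hull ℝ (s.erase y : Set E) : Set E) by
      rw [this]
      exact Set.Finite.isClosed_biUnion s.finite_toSet fun y hy => ih _ (Finset.erase_ssubset hy)
    refine subset_antisymm (fun x hx => ?_)
      (iUnion₂_subset fun y _ => Submodule.span_mono (by simp))
    rw [SetLike.mem_coe, hs, mem_hull_range_iff] at hx
    obtain ⟨μ, hμ, rfl⟩ := hx
    obtain ⟨ν, hν, ⟨y, hy⟩, hνμ⟩ := exists_nonneg_sum_eq_of_not_linearIndependent hli hμ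
    refine mem_iUnion₂.2 ⟨y, y.2, ?_⟩
    rw [← hνμ, SetLike.mem_coe]
    refine Submodule.sum_mem _ fun i _ => ?_
    by_cases hiy : i = y
    · simp [hiy, hy]
    · exact smul_mem _ (hν i) (Submodule.subset_span
        (Finset.mem_erase.2 ⟨fun h => hiy (Subtype.ext h), i.2⟩))

theorem isClosed_hull_of_finite {s : Set E} (hs : s.Finite) : IsClosed (hull ℝ s : Set E) := by
  simpa using isClosed_hull_finset hs.toFinset

end PointedCone

theorem Convex.exists_add_smul_mem_of_mem_hull {E : Type*} [AddCommGroup E] [Module ℝ E]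
    {C G : Set E} (hC : Convex ℝ C) {x w : E} (hx : x ∈ C) (hG : ∀ g ∈ G, x + g ∈ C)
    (hw : w ∈ PointedCone.hull ℝ G) : ∃ σ₀ > (0 : ℝ), ∀ σ ∈ Icc 0 σ₀, x + σ • w ∈ C := by
  -- The directions `w` with `x + σ • w ∈ C` for some `σ > 0` form a convex cone.
  set D := ConvexCone.hull ℝ ((x + ·) ⁻¹' C)
  have hD : PointedCone.hull ℝ G ≤ D.toPointedCone (ConvexCone.subset_hull (by simpa using hx)) :=
    Submodule.span_le.2 fun g hg => ConvexCone.subset_hull (hG g hg)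
  obtain ⟨r, hr, hrw⟩ := (ConvexCone.mem_hull_of_convex (hC.translate_preimage_right x)).1 (hD hw)
  rw [Set.mem_smul_set_iff_inv_smul_mem₀ hr.ne'] at hrw
  refine ⟨r⁻¹, inv_pos.2 hr, fun σ hσ => ?_⟩
  have hσr : σ * r ≤ 1 := by
    simpa [hr.ne'] using mul_le_mul_of_nonneg_right hσ.2 hr.le
  have := hC.add_smul_mem hx hrw ⟨mul_nonneg hσ.1 hr.le, hσr⟩
  rwa [smul_smul, mul_assoc, mul_inv_cancel₀ hr.ne', mul_one] at this

theorem inner_nonpos_of_mem_hull {E : Type*} [NormedAddCommGroup E] [InnerProductSpace ℝ E]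
    {s : Set E} {w n : E} (hs : ∀ d ∈ s, ⟪d, w⟫ ≤ 0) (hn : n ∈ PointedCone.hull ℝ s) :
    ⟪n, w⟫ ≤ 0 := by
  induction hn using Submodule.span_induction with
  | mem d hd => exact hs d hd
  | zero => simp
  | add n₁ n₂ _ _ ih₁ ih₂ => rw [inner_add_left]; linarith
  | smul c n _ ih =>
    rw [← Nonneg.coe_smul, real_inner_smul_left]
    exact mul_nonpos_of_nonneg_of_nonpos c.2 ih

theorem mem_tcone_of_tendsto {E : Type*} [NormedAddCommGroup E] [NormedSpace ℝ E]
    {s : Set E} {x y : E} {σ : ℕ → ℝ} {y' : ℕ → E} (hσ : ∀ k, 0 < σ k)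
    (hσ0 : Tendsto σ atTop (𝓝 0)) (hy : Tendsto y' atTop (𝓝 y))
    (hs : ∀ k, x + σ k • y' k ∈ s) : y ∈ tcone s x := by
  refine ⟨fun k => x + σ k • y' k, fun k => (σ k)⁻¹, hs, fun k => (inv_pos.2 (hσ k)).le,
    by simpa using tendsto_const_nhds.add (hσ0.smul hy), ?_⟩
  simpa [inv_smul_smul₀ (hσ _).ne'] using hy

theorem eventually_nhdsGT_add_mul_nonpos {α β : ℝ} (hα : α ≤ 0) (hβ : α = 0 → β ≤ 0) :
    ∀ᶠ t in 𝓝[>] 0, α + t * β ≤ 0 := by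
  rcases hα.lt_or_eq with hα | rfl
  · have : ContinuousAt (fun t : ℝ => α + t * β) 0 := by fun_prop
    exact nhdsWithin_le_nhds <| (this.eventually_lt continuousAt_const (by simpa using hα)).mono
      fun t ht => ht.le
  · filter_upwards [self_mem_nhdsWithin] with t ht
    simpa using mul_nonpos_of_nonneg_of_nonpos (le_of_lt ht) (hβ rfl)

open scoped Pointwise

namespace CPWL

variable {m : ℕ} (θ : CPWL m)

theorem term_le_val (z : Ev m) (i : Fin θ.l) : ⟪θ.a i, z⟫ - θ.al i ≤ θ.val z :=
  le_ciSup (f := fun i => ⟪θ.a i, z⟫ - θ.al i) (Set.finite_range _).bddAbove i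

theorem val_le {z : Ev m} {r : ℝ} (h : ∀ i, ⟪θ.a i, z⟫ - θ.al i ≤ r) : θ.val z ≤ r :=
  have : Nonempty (Fin θ.l) := ⟨⟨0, θ.hl⟩⟩
  ciSup_le h

theorem mem_Kact_iff {z : Ev m} {i : Fin θ.l} :
    i ∈ θ.Kact z ↔ ∀ i', ⟪θ.a i', z⟫ - θ.al i' ≤ ⟪θ.a i, z⟫ - θ.al i :=
  ⟨fun h i' => h ▸ θ.term_le_val z i', fun h => (θ.val_le h).antisymm (θ.term_le_val z i)⟩

theorem Kact_nonempty (z : Ev m) : (θ.Kact z).Nonempty := by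
  have : Nonempty (Fin θ.l) := ⟨⟨0, θ.hl⟩⟩
  obtain ⟨i, hi⟩ := Finite.exists_max fun i => ⟪θ.a i, z⟫ - θ.al i
  exact ⟨i, θ.mem_Kact_iff.2 hi⟩

def activeRegion (K : Set (Fin θ.l)) (I : Set (Fin θ.p)) : Set (Ev m) :=
  {z | z ∈ θ.dom ∧ K ⊆ θ.Kact z ∧ I ⊆ θ.Iact z}

def subgradHull (K : Set (Fin θ.l)) (I : Set (Fin θ.p)) : Set (Ev m) :=
  convexHull ℝ (θ.a '' K) + (PointedCone.hull ℝ (θ.d '' I) : Set (Ev m))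

def tangentGens (K : Set (Fin θ.l)) (I : Set (Fin θ.p)) (vb : Ev m) : Set (Ev m) :=
  (fun i => θ.a i - vb) '' K ∪ θ.d '' I

variable {θ} {K : Set (Fin θ.l)} {I : Set (Fin θ.p)}

theorem finite_tangentGens {vb : Ev m} : (θ.tangentGens K I vb).Finite :=
  ((toFinite K).image _).union ((toFinite I).image _)

theorem mem_activeRegion_self {z : Ev m} (hz : z ∈ θ.dom) :
    z ∈ θ.activeRegion (θ.Kact z) (θ.Iact z) :=
  ⟨hz, subset_rfl, subset_rfl⟩

theorem convex_activeRegion : Convex ℝ (θ.activeRegion K I) := by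
  rintro z₁ ⟨hd₁, hK₁, hI₁⟩ z₂ ⟨hd₂, hK₂, hI₂⟩ s t hs ht hst
  obtain rfl : t = 1 - s := by linarith
  have hlin : ∀ y : Ev m, ⟪y, s • z₁ + (1 - s) • z₂⟫ = s * ⟪y, z₁⟫ + (1 - s) * ⟪y, z₂⟫ :=
    fun y => by rw [inner_add_right, real_inner_smul_right, real_inner_smul_right]
  have hval : θ.val (s • z₁ + (1 - s) • z₂) ≤ s * θ.val z₁ + (1 - s) * θ.val z₂ := by
    refine θ.val_le fun i => ?_
    rw [hlin]
    nlinarith [mul_le_mul_of_nonneg_left (θ.term_le_val z₁ i) hs,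
      mul_le_mul_of_nonneg_left (θ.term_le_val z₂ i) ht]
  refine ⟨fun j => ?_, fun i hi => ?_, fun j hj => ?_⟩
  · rw [hlin]
    nlinarith [mul_le_mul_of_nonneg_left (hd₁ j) hs, mul_le_mul_of_nonneg_left (hd₂ j) ht]
  · refine le_antisymm ?_ (θ.term_le_val _ i)
    rw [hlin]
    have h₁ : θ.val z₁ = _ := hK₁ hi
    have h₂ : θ.val z₂ = _ := hK₂ hi
    rw [h₁, h₂] at hval
    linarith
  · change ⟪θ.d j, _⟫ = θ.be j
    rw [hlin, show ⟪θ.d j, z₁⟫ = θ.be j from hI₁ hj, show ⟪θ.d j, z₂⟫ = θ.be j from hI₂ hj,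
      ← add_mul, add_sub_cancel, one_mul]

theorem isClosed_activeRegion : IsClosed (θ.activeRegion K I) := by
  have : θ.activeRegion K I = (⋂ j, {z | ⟪θ.d j, z⟫ ≤ θ.be j}) ∩
      ((⋂ i ∈ K, ⋂ i', {z | ⟪θ.a i', z⟫ - θ.al i' ≤ ⟪θ.a i, z⟫ - θ.al i}) ∩
        ⋂ j ∈ I, {z | ⟪θ.d j, z⟫ = θ.be j}) := by
    ext z
    simp [activeRegion, dom, Iact, subset_def, mem_Kact_iff]
  rw [this]
  refine (isClosed_iInter fun j => isClosed_le (by fun_prop) continuous_const).inter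
    ((isClosed_biInter fun i _ => isClosed_iInter fun i' =>
      isClosed_le (by fun_prop) (by fun_prop)).inter
      (isClosed_biInter fun j _ => isClosed_eq (by fun_prop) continuous_const))

theorem add_mem_subgradHull {v w : Ev m} (hv : v ∈ θ.subgradHull K I)
    (hw : w ∈ PointedCone.hull ℝ (θ.d '' I)) : v + w ∈ θ.subgradHull K I := by
  obtain ⟨c, hc, n, hn, rfl⟩ := hv
  exact add_assoc c n w ▸ Set.add_mem_add hc (add_mem hn hw)

theorem a_mem_subgradHull {i : Fin θ.l} (hi : i ∈ K) : θ.a i ∈ θ.subgradHull K I :=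
  add_zero (θ.a i) ▸ Set.add_mem_add (subset_convexHull ℝ _ (mem_image_of_mem _ hi)) (zero_mem _)

theorem convex_subgradHull : Convex ℝ (θ.subgradHull K I) :=
  (convex_convexHull ℝ _).add (PointedCone.convex _)

theorem isClosed_subgradHull : IsClosed (θ.subgradHull K I) :=
  (PointedCone.isClosed_hull_of_finite (Set.toFinite _)).add_left_of_isCompact
    ((Set.toFinite _).isCompact_convexHull (𝕜 := ℝ))

theorem subgradHull_subset_subdiff {z : Ev m} (hz : z ∈ θ.activeRegion K I) :
    θ.subgradHull K I ⊆ θ.subdiff z := by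
  rintro _ ⟨c, hc, n, hn, rfl⟩
  refine ⟨hz.1, fun z' hz' => ?_⟩
  have hcz : ⟪c, z' - z⟫ ≤ θ.val z' - θ.val z := by
    refine convexHull_min ?_ (convex_halfSpace_le ((innerₛₗ ℝ).flip (z' - z)).isLinear _) hc
    rintro _ ⟨i, hi, rfl⟩
    have := θ.term_le_val z' i
    have hzi : θ.val z = _ := hz.2.1 hi
    simp only [mem_ofPred_eq, LinearMap.flip_apply, innerₛₗ_apply_apply, inner_sub_right]
    linarith
  have hnz : ⟪n, z' - z⟫ ≤ 0 := by
    refine inner_nonpos_of_mem_hull ?_ hn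
    rintro _ ⟨j, hj, rfl⟩
    have hzj : ⟪θ.d j, z⟫ = θ.be j := hz.2.2 hj
    rw [inner_sub_right, hzj]
    linarith [hz' j]
  rw [inner_add_left]
  linarith

theorem exists_add_smul_mem_dom_val_le {z h : Ev m} {u : ℝ} (hz : z ∈ θ.dom)
    (hK : ∀ i ∈ θ.Kact z, ⟪θ.a i, h⟫ < u) (hI : ∀ j ∈ θ.Iact z, ⟪θ.d j, h⟫ ≤ 0) :
    ∃ t > 0, z + t • h ∈ θ.dom ∧ θ.val (z + t • h) ≤ θ.val z + t * u := by
  have hlin : ∀ (y : Ev m) (t : ℝ), ⟪y, z + t • h⟫ = ⟪y, z⟫ + t * ⟪y, h⟫ := fun y t => by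
    rw [inner_add_right, real_inner_smul_right]
  have hdom : ∀ j, ∀ᶠ t in 𝓝[>] 0, (⟪θ.d j, z⟫ - θ.be j) + t * ⟪θ.d j, h⟫ ≤ 0 := fun j =>
    eventually_nhdsGT_add_mul_nonpos (by linarith [hz j])
      fun h0 => hI j (show ⟪θ.d j, z⟫ = θ.be j by linarith)
  have hval : ∀ i, ∀ᶠ t in 𝓝[>] 0,
      (⟪θ.a i, z⟫ - θ.al i - θ.val z) + t * (⟪θ.a i, h⟫ - u) ≤ 0 := fun i =>
    eventually_nhdsGT_add_mul_nonpos (by linarith [θ.term_le_val z i])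
      fun h0 => by linarith [hK i (show θ.val z = ⟪θ.a i, z⟫ - θ.al i by linarith)]
  obtain ⟨t, ⟨hdt, hvt⟩, ht⟩ :=
    ((eventually_all.2 hdom).and (eventually_all.2 hval)).and self_mem_nhdsWithin |>.exists
  refine ⟨t, ht, fun j => ?_, θ.val_le fun i => ?_⟩
  · rw [hlin]; linarith [hdt j]
  · rw [hlin]; linarith [hvt i]

theorem subdiff_subset_subgradHull (z : Ev m) :
    θ.subdiff z ⊆ θ.subgradHull (θ.Kact z) (θ.Iact z) := by
  intro v hv
  by_contra hvC
  obtain ⟨f, u, hfC, hfv⟩ :=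
    geometric_hahn_banach_closed_point convex_subgradHull isClosed_subgradHull hvC
  set h := (InnerProductSpace.toDual ℝ (Ev m)).symm f
  have hh : ∀ y, ⟪h, y⟫ = f y := fun y => InnerProductSpace.toDual_symm_apply
  have hK : ∀ i ∈ θ.Kact z, ⟪θ.a i, h⟫ < u := fun i hi => by
    rw [real_inner_comm, hh]
    exact hfC _ (a_mem_subgradHull hi)
  have hI : ∀ j ∈ θ.Iact z, ⟪θ.d j, h⟫ ≤ 0 := by
    intro j hj
    rw [real_inner_comm, hh]
    by_contra! hpos
    -- Moving far enough along the recession direction `d j` leaves the half-space `f < u`.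
    obtain ⟨i, hi⟩ := θ.Kact_nonempty z
    have hfi := hfC _ (a_mem_subgradHull (I := θ.Iact z) hi)
    have := hfC _ (add_mem_subgradHull (a_mem_subgradHull hi)
      (PointedCone.smul_mem _ (div_nonneg (sub_nonneg.2 hfi.le) hpos.le)
        (PointedCone.subset_hull (mem_image_of_mem θ.d hj))))
    rw [map_add, map_smul, smul_eq_mul, div_mul_cancel₀ _ hpos.ne'] at this
    linarith
  obtain ⟨t, ht, hdom, hval⟩ := exists_add_smul_mem_dom_val_le hv.1 hK hI
  have := hv.2 _ hdom
  rw [add_sub_cancel_left, real_inner_smul_right, real_inner_comm, hh] at this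
  linarith [mul_lt_mul_of_pos_left hfv ht]

theorem sub_mem_hull_tangentGens {v : Ev m} (hv : v ∈ θ.subgradHull K I) (vb : Ev m) :
    v - vb ∈ PointedCone.hull ℝ (θ.tangentGens K I vb) := by
  obtain ⟨c, hc, n, hn, rfl⟩ := hv
  rw [add_sub_right_comm]
  refine add_mem ?_ (Submodule.span_mono subset_union_right hn)
  rw [sub_eq_neg_add]
  refine convexHull_min ?_ ((PointedCone.convex _).translate_preimage_right (-vb)) hc
  rintro _ ⟨i, hi, rfl⟩
  exact PointedCone.subset_hull (Or.inl ⟨i, hi, (neg_add_eq_sub vb (θ.a i)).symm⟩)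

theorem exists_add_smul_mem_subgradHull {vb w : Ev m} (hvb : vb ∈ θ.subgradHull K I)
    (hw : w ∈ PointedCone.hull ℝ (θ.tangentGens K I vb)) :
    ∃ σ₀ > (0 : ℝ), ∀ σ ∈ Icc 0 σ₀, vb + σ • w ∈ θ.subgradHull K I := by
  refine convex_subgradHull.exists_add_smul_mem_of_mem_hull hvb ?_ hw
  rintro _ (⟨i, hi, rfl⟩ | ⟨j, hj, rfl⟩)
  · simpa using a_mem_subgradHull hi
  · exact add_mem_subgradHull hvb (PointedCone.subset_hull (mem_image_of_mem θ.d hj))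

theorem mem_Dsub_of_tendsto {zb vb u w : Ev m} (hzb : zb ∈ θ.activeRegion K I)
    (hvb : vb ∈ θ.subgradHull K I) (hw : w ∈ PointedCone.hull ℝ (θ.tangentGens K I vb))
    {z : ℕ → Ev m} {t : ℕ → ℝ} (hz : ∀ k, z k ∈ θ.activeRegion K I) (ht : ∀ k, 0 < t k)
    (ht0 : Tendsto t atTop (𝓝 0)) (hu : Tendsto (fun k => (t k)⁻¹ • (z k - zb)) atTop (𝓝 u)) :
    w ∈ θ.Dsub zb vb u := by
  obtain ⟨σ₀, hσ₀, hσ⟩ := exists_add_smul_mem_subgradHull hvb hw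
  have hmin : Tendsto (fun k => min (t k) σ₀) atTop (𝓝 0) := by
    simpa [min_eq_left hσ₀.le] using ht0.min (tendsto_const_nhds : Tendsto (fun _ => σ₀) atTop _)
  refine mem_tcone_of_tendsto (fun k => lt_min (ht k) hσ₀) hmin (hu.prodMk_nhds tendsto_const_nhds)
    fun k => ?_
  show vb + min (t k) σ₀ • w ∈ θ.subdiff (zb + min (t k) σ₀ • (t k)⁻¹ • (z k - zb))
  refine subgradHull_subset_subdiff ?_ (hσ _ ⟨(lt_min (ht k) hσ₀).le, min_le_right _ _⟩)
  have := convex_activeRegion.add_smul_sub_mem hzb (hz k)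
    ⟨div_nonneg (lt_min (ht k) hσ₀).le (ht k).le, (div_le_one (ht k)).2 (min_le_left _ _)⟩
  simpa [smul_smul, div_eq_mul_inv] using this

end CPWL

theorem isBoundedLinearMap_adjoint_apply {E F : Type*} [NormedAddCommGroup E]
    [InnerProductSpace ℝ E] [CompleteSpace E] [NormedAddCommGroup F] [InnerProductSpace ℝ F]
    [CompleteSpace F] (v : F) : IsBoundedLinearMap ℝ fun L : E →L[ℝ] F => L.adjoint v :=
  IsLinearMap.with_bound ⟨fun L L' => by simp, fun c L => by simp⟩ ‖v‖ fun L => by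
    simpa [mul_comm] using L.adjoint.le_opNorm v

section VarSys

variable {n m : ℕ} {f : Ev n → Ev n} {Φ : Ev n → Ev m} {xb : Ev n} {vb : Ev m}

theorem hasFDerivAt_Psi (hf : DifferentiableAt ℝ f xb)
    (hΦ' : DifferentiableAt ℝ (fderiv ℝ Φ) xb) :
    HasFDerivAt (fun x => Psi f Φ x vb) (gradxPsi f Φ xb vb) xb :=
  (hf.add ((isBoundedLinearMap_adjoint_apply vb).differentiableAt.comp xb hΦ')).hasFDerivAt

theorem tendsto_adjD_smul_sub (hf : DifferentiableAt ℝ f xb)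
    (hΦ' : DifferentiableAt ℝ (fderiv ℝ Φ) xb) (hvb : Psi f Φ xb vb = 0)
    {x : ℕ → Ev n} {v : ℕ → Ev m} {c : ℕ → ℝ} {ξ : Ev n}
    (hPsi : ∀ k, Psi f Φ (x k) (v k) = 0) (hx : Tendsto x atTop (𝓝 xb))
    (hv : Tendsto v atTop (𝓝 vb)) (hξ : Tendsto (fun k => c k • (x k - xb)) atTop (𝓝 ξ)) :
    Tendsto (fun k => adjD Φ xb (c k • (v k - vb))) atTop (𝓝 (-gradxPsi f Φ xb vb ξ)) := by
  have hd : Tendsto (fun k => x k - xb) atTop (𝓝 0) := tendsto_sub_nhds_zero_iff.2 hx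
  have hΨ := (hasFDerivAt_Psi (vb := vb) hf hΦ').hasFDerivWithinAt.lim hd
    (.of_forall fun _ => mem_univ _) hξ
  have hDΦ := hΦ'.hasFDerivAt.hasFDerivWithinAt.lim hd (.of_forall fun _ => mem_univ _) hξ
  simp only [add_sub_cancel] at hΨ hDΦ
  -- The change of Jacobian is `O(‖x k - xb‖)`, so after rescaling it meets `v k - vb → 0`.
  have hrem : Tendsto (fun k => (c k • (fderiv ℝ Φ (x k) - fderiv ℝ Φ xb)).adjoint (v k - vb))
      atTop (𝓝 0) := by
    have h₁ := (ContinuousLinearMap.adjoint.continuous.tendsto _).comp hDΦ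
    have h₂ : Tendsto (fun k => v k - vb) atTop (𝓝 0) := tendsto_sub_nhds_zero_iff.2 hv
    have := (isBoundedBilinearMap_apply.continuous.tendsto _).comp (h₁.prodMk_nhds h₂)
    simp only [map_zero] at this
    exact this
  have := hΨ.neg.sub hrem
  rw [sub_zero] at this
  refine this.congr fun k => ?_
  have hk := hPsi k
  simp only [Psi, adjD] at hvb hk ⊢
  simp only [hvb, sub_zero, map_smul, map_sub, sub_apply, smul_apply]
  linear_combination (norm := module) (-c k) • hk

theorem isCritical_of_tendsto_of_mem_activeRegion {θ : CPWL m} {K : Set (Fin θ.l)}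
    {I : Set (Fin θ.p)} (hf : DifferentiableAt ℝ f xb) (hΦ : DifferentiableAt ℝ Φ xb)
    (hΦ' : DifferentiableAt ℝ (fderiv ℝ Φ) xb) (hvb : vb ∈ Lam f Φ θ xb)
    {x : ℕ → Ev n} {v : ℕ → Ev m} {t : ℕ → ℝ} {ξ : Ev n} (hξ0 : ξ ≠ 0)
    (hPsi : ∀ k, Psi f Φ (x k) (v k) = 0)
    (hmem : ∀ k, Φ (x k) ∈ θ.activeRegion K I ∧ v k ∈ θ.subgradHull K I)
    (hx : Tendsto x atTop (𝓝 xb)) (hv : Tendsto v atTop (𝓝 vb)) (ht : ∀ k, 0 < t k)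
    (ht0 : Tendsto t atTop (𝓝 0)) (hξ : Tendsto (fun k => (t k)⁻¹ • (x k - xb)) atTop (𝓝 ξ)) :
    IsCritical f Φ θ xb vb := by
  have hzb : Φ xb ∈ θ.activeRegion K I := CPWL.isClosed_activeRegion.mem_of_tendsto
    (hΦ.continuousAt.tendsto.comp hx) (.of_forall fun k => (hmem k).1)
  have hvbC : vb ∈ θ.subgradHull K I :=
    CPWL.isClosed_subgradHull.mem_of_tendsto hv (.of_forall fun k => (hmem k).2)
  set A := adjD Φ xb
  set G := θ.tangentGens K I vb
  have hcl : IsClosed (A '' PointedCone.hull ℝ G) := by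
    rw [← ContinuousLinearMap.coe_coe, PointedCone.image_hull]
    exact PointedCone.isClosed_hull_of_finite (CPWL.finite_tangentGens.image _)
  obtain ⟨w, hw, hAw⟩ := hcl.mem_of_tendsto (tendsto_adjD_smul_sub hf hΦ' hvb.1 hPsi hx hv hξ)
    (.of_forall fun k => mem_image_of_mem A (PointedCone.smul_mem _ (inv_pos.2 (ht k)).le
      (CPWL.sub_mem_hull_tangentGens (hmem k).2 vb)))
  have hu : Tendsto (fun k => (t k)⁻¹ • (Φ (x k) - Φ xb)) atTop (𝓝 (fderiv ℝ Φ xb ξ)) := by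
    simpa using hΦ.hasFDerivAt.hasFDerivWithinAt.lim (tendsto_sub_nhds_zero_iff.2 hx)
      (.of_forall fun _ => mem_univ _) hξ
  refine ⟨ξ, hξ0, w, CPWL.mem_Dsub_of_tendsto hzb hvbC hw (fun k => (hmem k).1) ht ht0 hu, ?_⟩
  rw [hAw, add_neg_cancel]

theorem isCritical_of_tendsto {θ : CPWL m} (hf : DifferentiableAt ℝ f xb)
    (hΦ : DifferentiableAt ℝ Φ xb) (hΦ' : DifferentiableAt ℝ (fderiv ℝ Φ) xb)
    (hvb : vb ∈ Lam f Φ θ xb) {x : ℕ → Ev n} {v : ℕ → Ev m} (hxne : ∀ k, x k ≠ xb)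
    (hPsi : ∀ k, Psi f Φ (x k) (v k) = 0) (hsub : ∀ k, v k ∈ θ.subdiff (Φ (x k)))
    (hx : Tendsto x atTop (𝓝 xb)) (hv : Tendsto v atTop (𝓝 vb)) :
    IsCritical f Φ θ xb vb := by
  set t := fun k => ‖x k - xb‖
  have ht : ∀ k, 0 < t k := fun k => norm_pos_iff.2 (sub_ne_zero.2 (hxne k))
  have ht0 : Tendsto t atTop (𝓝 0) := by simpa using (tendsto_sub_nhds_zero_iff.2 hx).norm
  obtain ⟨ξ, hξ, φ, hφ, hφξ⟩ := (isCompact_sphere (0 : Ev n) 1).tendsto_subseq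
    (x := fun k => (t k)⁻¹ • (x k - xb)) fun k => by
      simp [norm_smul, t, inv_mul_cancel₀ (ht k).ne']
  obtain ⟨KI, hKI⟩ := frequently_exists.1 <| Frequently.of_forall (f := atTop)
    (p := fun k => ∃ KI, (θ.Kact (Φ (x (φ k))), θ.Iact (Φ (x (φ k)))) = KI) fun k => ⟨_, rfl⟩
  obtain ⟨ψ, hψ, hψKI⟩ := extraction_of_frequently_atTop hKI
  have hφψ := (hφ.comp hψ).tendsto_atTop
  refine isCritical_of_tendsto_of_mem_activeRegion (K := KI.1) (I := KI.2) (x := x ∘ φ ∘ ψ)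
    hf hΦ hΦ' hvb (by rintro rfl; simp at hξ) (fun k => hPsi _) (fun k => ?_) (hx.comp hφψ)
    (hv.comp hφψ) (fun k => ht _) (ht0.comp hφψ) (hφξ.comp hψ.tendsto_atTop)
  rw [← hψKI k]
  exact ⟨CPWL.mem_activeRegion_self (hsub _).1, CPWL.subdiff_subset_subgradHull _ (hsub _)⟩

theorem eventually_fst_eq_of_not_isCritical {θ : CPWL m} (hf : DifferentiableAt ℝ f xb)
    (hΦ : DifferentiableAt ℝ Φ xb) (hΦ' : DifferentiableAt ℝ (fderiv ℝ Φ) xb)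
    (hvb : vb ∈ Lam f Φ θ xb) (hnc : ¬ IsCritical f Φ θ xb vb) :
    ∀ᶠ q in 𝓝 (xb, vb), q ∈ Smap f Φ θ 0 0 → q.1 = xb := by
  by_contra h
  obtain ⟨q, hq, hqS⟩ := frequently_iff_seq_forall.1 (not_eventually.1 h)
  push Not at hqS
  exact hnc <| isCritical_of_tendsto hf hΦ hΦ' hvb (fun k => (hqS k).2) (fun k => (hqS k).1.1)
    (fun k => by simpa using (hqS k).1.2) hq.fst_nhds hq.snd_nhds

end VarSys

/-- if the multiplier is noncritical then, locally, the unperturbed solution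
set coincides with `{x̄} × Λ(x̄)`. -/
theorem stmt13 {n m : ℕ} (θ : CPWL m) (f : Ev n → Ev n) (Φ : Ev n → Ev m)
    (xb : Ev n) (vb : Ev m)
    (hf : ContDiffAt ℝ 1 f xb) (hPhi : ContDiffAt ℝ 2 Φ xb)
    (hvb : vb ∈ Lam f Φ θ xb)
    (hnc : ¬ IsCritical f Φ θ xb vb) :
    ∃ V ∈ 𝓝 ((xb, vb) : Ev n × Ev m),
      Smap f Φ θ 0 0 ∩ V = ({xb} ×ˢ Lam f Φ θ xb) ∩ V := by
  obtain ⟨V, hV, hVS⟩ := (eventually_fst_eq_of_not_isCritical (hf.differentiableAt one_ne_zero)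
    (hPhi.differentiableAt two_ne_zero)
    ((hPhi.fderiv_right (m := 1) (by norm_num)).differentiableAt one_ne_zero) hvb hnc).exists_mem
  refine ⟨V, hV, Set.ext fun q => and_congr_left fun hqV => ?_⟩
  obtain ⟨x, v⟩ := q
  constructor
  · intro hq
    obtain rfl : x = xb := hVS _ hqV hq
    exact ⟨rfl, hq.1, by simpa using hq.2⟩
  · rintro ⟨rfl, hΨ, hsub⟩
    exact ⟨hΨ, by simpa using hsub⟩
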